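/- arXiv:1403.4695 — 2 statements merged into one kernel-verified Lean document; each statement's English description precedes it below -/
import Mathlib

section
/- Let (u₁,u₂) be a positive solution of the coupled Gross–Pitaevskii system with coefficients λ₁,ε, λ₂,ε > 0. For i,j = 1,2 with j ≠ i define α_i = 1/λ_{i,ε} + √( 1/λ_{i,ε}² + (1/ε²)(1 + g λ_{j,ε}/(g_j λ_{i,ε})) ), and for s ≥ r > √(λ_{i,ε}) set w_i(s) = (min_{∂B_r} u_i) · exp( −(α_i/2)(s² − r²) ). Then u_i(x) ≥ w_i(|x|) for all |x| ≥ r > √(λ_{i,ε}), i = 1,2. -/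
open MeasureTheory Filter
open scoped Real Topology

noncomputable section

abbrev Pt := EuclideanSpace ℝ (Fin 2)

/-- The Laplacian, written as the sum of second directional derivatives along
the coordinate axes. -/
def lapR (f : Pt → ℝ) (x : Pt) : ℝ :=
  ∑ i : Fin 2, iteratedDeriv 2 (fun t : ℝ => f (x + t • EuclideanSpace.single i (1:ℝ))) 0

/-- `(η₁, η₂)` solves the coupled Gross–Pitaevskii system with coefficients
`lam₁, lam₂`, including the decay at infinity. -/
def GPSolution (g₁ g₂ g ε lam₁ lam₂ : ℝ) (η₁ η₂ : Pt → ℝ) : Prop :=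
  ContDiff ℝ (⊤ : ℕ∞) η₁ ∧ ContDiff ℝ (⊤ : ℕ∞) η₂ ∧
  (∀ x : Pt, -ε ^ 2 * lapR η₁ x + ‖x‖ ^ 2 * η₁ x + g₁ * η₁ x ^ 3
      + g * η₁ x * η₂ x ^ 2 = lam₁ * η₁ x) ∧
  (∀ x : Pt, -ε ^ 2 * lapR η₂ x + ‖x‖ ^ 2 * η₂ x + g₂ * η₂ x ^ 3
      + g * η₁ x ^ 2 * η₂ x = lam₂ * η₂ x) ∧
  Tendsto η₁ (cocompact Pt) (𝓝 0) ∧ Tendsto η₂ (cocompact Pt) (𝓝 0)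

/-- A positive solution of the coupled Gross–Pitaevskii system. -/
def GPPositiveSolution (g₁ g₂ g ε lam₁ lam₂ : ℝ) (η₁ η₂ : Pt → ℝ) : Prop :=
  GPSolution g₁ g₂ g ε lam₁ lam₂ η₁ η₂ ∧ (∀ x, 0 < η₁ x) ∧ (∀ x, 0 < η₂ x)

/-!
Each component solves a linear equation `-ε² Δu + (|x|² + V) u = λ u` with potential
`V = g₁ u₁² + g u₂²` (resp. `g₂ u₂² + g u₁²`). At a global maximum of `u` the Laplacian is
nonpositive, which gives `g_i u_i² ≤ λ_i`, hence `0 ≤ V ≤ λ_i + B` with `B = g λ_j / g_j`.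
The rate `α` is chosen so that the Gaussian `w` satisfies `ε² Δw ≥ (|x|² + B) w` for
`|x|² ≥ λ_i`. Hence `ε² Δ(w - u) ≥ (|x|² + V - λ_i)(w - u) > 0` wherever `w > u` outside `B_r`,
so `w - u` has no positive maximum there; as `w ≤ u` on `∂B_r` and `w - u → 0` at infinity,
`w ≤ u` outside `B_r`.
-/

theorem deriv_deriv_nonpos_of_isLocalMax {f : ℝ → ℝ} {a : ℝ} (hmax : IsLocalMax f a)
    (hf : ContinuousAt f a) : deriv (deriv f) a ≤ 0 := by
  by_contra! hpos
  -- A positive second derivative would make the critical point `a` a local minimum too,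
  -- so `f` would be locally constant near `a`.
  have hmin := isLocalMin_of_deriv_deriv_pos hpos hmax.deriv_eq_zero hf
  have hconst : f =ᶠ[𝓝 a] fun _ => f a :=
    (hmax.and hmin).mono fun _ hx => le_antisymm hx.1 hx.2
  have h := hconst.deriv.deriv_eq
  simp only [deriv_const'] at h
  exact hpos.ne' (h.trans (by simp))

theorem iteratedDeriv_two_eq_deriv_deriv (f : ℝ → ℝ) :
    iteratedDeriv 2 f = deriv (deriv f) := by
  simp [iteratedDeriv_eq_iterate]

theorem lapR_nonpos_of_isLocalMax {f : Pt → ℝ} {x : Pt} (hmax : IsLocalMax f x)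
    (hf : ContinuousAt f x) : lapR f x ≤ 0 := by
  refine Finset.sum_nonpos fun i _ => ?_
  set γ : ℝ → Pt := fun t => x + t • EuclideanSpace.single i 1
  have hγ : ContinuousAt γ 0 := by fun_prop
  have hγ0 : γ 0 = x := by simp [γ]
  rw [iteratedDeriv_two_eq_deriv_deriv]
  exact deriv_deriv_nonpos_of_isLocalMax (IsLocalMax.comp_continuous (by simpa [γ] using hmax) hγ)
    (hf.comp_of_eq hγ hγ0)

theorem lapR_sub {u v : Pt → ℝ} (hu : ContDiff ℝ 2 u) (hv : ContDiff ℝ 2 v) (x : Pt) :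
    lapR (fun y => u y - v y) x = lapR u x - lapR v x := by
  rw [lapR, lapR, lapR, ← Finset.sum_sub_distrib]
  refine Finset.sum_congr rfl fun i _ => ?_
  have hline : ContDiff ℝ 2 fun t : ℝ => x + t • EuclideanSpace.single i (1 : ℝ) := by fun_prop
  exact iteratedDeriv_fun_sub (hu.comp hline).contDiffAt (hv.comp hline).contDiffAt

theorem norm_add_smul_single_sq (x : Pt) (i : Fin 2) (t : ℝ) :
    ‖x + t • EuclideanSpace.single i (1 : ℝ)‖ ^ 2 = ‖x‖ ^ 2 + 2 * t * x i + t ^ 2 := by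
  rw [norm_add_sq_real, real_inner_smul_right, EuclideanSpace.inner_single_right, norm_smul,
    PiLp.norm_single]
  simp
  ring

theorem norm_sq_eq_sum (x : Pt) : ‖x‖ ^ 2 = ∑ i : Fin 2, x i ^ 2 := by
  simp [EuclideanSpace.norm_sq_eq]

theorem iteratedDeriv_two_gaussian_line (m α c b : ℝ) :
    iteratedDeriv 2 (fun t : ℝ => m * Real.exp (-(α / 2) * (c + 2 * t * b + t ^ 2))) 0
      = (α ^ 2 * b ^ 2 - α) * (m * Real.exp (-(α / 2) * c)) := by
  set p : ℝ → ℝ := fun t => -(α / 2) * (c + 2 * t * b + t ^ 2)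
  have hp : ∀ t, HasDerivAt p (-α * (b + t)) t := fun t =>
    ((((hasDerivAt_id' t).const_mul 2).mul_const b).const_add c).fun_add (hasDerivAt_pow 2 t)
      |>.const_mul (-(α / 2)) |>.congr_deriv (by push_cast; ring)
  have hd : deriv (fun t => m * Real.exp (p t)) = fun t => m * (Real.exp (p t) * (-α * (b + t))) :=
    funext fun t => ((hp t).exp.const_mul m).deriv
  have hd2 : HasDerivAt (fun t => m * (Real.exp (p t) * (-α * (b + t))))
      (m * (Real.exp (p 0) * (-α * b) * (-α * b) + Real.exp (p 0) * -α)) 0 := by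
    simpa using ((hp 0).exp.mul (((hasDerivAt_id (0 : ℝ)).const_add b).const_mul (-α))).const_mul m
  rw [iteratedDeriv_two_eq_deriv_deriv, hd, hd2.deriv]
  simp only [p]
  ring_nf

theorem lapR_gaussian (m α r : ℝ) (x : Pt) :
    lapR (fun y => m * Real.exp (-(α / 2) * (‖y‖ ^ 2 - r ^ 2))) x
      = (α ^ 2 * ‖x‖ ^ 2 - 2 * α) * (m * Real.exp (-(α / 2) * (‖x‖ ^ 2 - r ^ 2))) := by
  have hline : ∀ i : Fin 2, (fun t : ℝ => m * Real.exp (-(α / 2) *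
      (‖x + t • EuclideanSpace.single i (1 : ℝ)‖ ^ 2 - r ^ 2)))
      = fun t => m * Real.exp (-(α / 2) * ((‖x‖ ^ 2 - r ^ 2) + 2 * t * x i + t ^ 2)) :=
    fun i => funext fun t => by rw [norm_add_smul_single_sq]; ring_nf
  simp only [lapR, hline, iteratedDeriv_two_gaussian_line, ← Finset.sum_mul,
    Finset.sum_sub_distrib, ← Finset.mul_sum, ← norm_sq_eq_sum]
  simp

theorem tendsto_gaussian_cocompact {E : Type*} [NormedAddCommGroup E] [ProperSpace E]
    (m α c : ℝ) (hα : 0 < α) :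
    Tendsto (fun y : E => m * Real.exp (-(α / 2) * (‖y‖ ^ 2 - c))) (cocompact E) (𝓝 0) := by
  have hexp : Tendsto (fun s : ℝ => -(α / 2) * (s ^ 2 - c)) atTop atBot :=
    Tendsto.const_mul_atTop_of_neg (by linarith)
      (tendsto_atTop_add_const_right atTop (-c) (tendsto_pow_atTop two_ne_zero))
  simpa [Function.comp_def] using
    ((Real.tendsto_exp_atBot.comp hexp).const_mul m).comp (tendsto_norm_cocompact_atTop (E := E))

/-- The positive root `α` of `ε² (α² - 2α/λ) = 1 + B/λ`. -/
def decayRate (ε lam B : ℝ) : ℝ :=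
  1 / lam + Real.sqrt (1 / lam ^ 2 + 1 / ε ^ 2 * (1 + B / lam))

theorem decayRate_pos {ε lam : ℝ} (B : ℝ) (hlam : 0 < lam) : 0 < decayRate ε lam B := by
  unfold decayRate
  positivity

theorem sq_add_le_decayRate {ε lam B s : ℝ} (hε : 0 < ε) (hlam : 0 < lam) (hB : 0 ≤ B)
    (hs : lam ≤ s ^ 2) :
    s ^ 2 + B ≤ ε ^ 2 * (decayRate ε lam B ^ 2 * s ^ 2 - 2 * decayRate ε lam B) := by
  set α := decayRate ε lam B
  have hroot : ε ^ 2 * (α ^ 2 - 2 * α / lam) = 1 + B / lam := by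
    have h : (α - 1 / lam) ^ 2 = 1 / lam ^ 2 + 1 / ε ^ 2 * (1 + B / lam) := by
      simp only [α, decayRate, add_sub_cancel_left]
      exact Real.sq_sqrt (by positivity)
    rw [show α ^ 2 - 2 * α / lam = (α - 1 / lam) ^ 2 - 1 / lam ^ 2 by ring, h]
    field_simp
    ring
  have hs' : 1 ≤ s ^ 2 / lam := (one_le_div hlam).mpr hs
  have hα := decayRate_pos (ε := ε) B hlam
  calc s ^ 2 + B ≤ s ^ 2 * (1 + B / lam) + 2 * ε ^ 2 * α * (s ^ 2 / lam - 1) := by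
        have : B ≤ B * (s ^ 2 / lam) := le_mul_of_one_le_right hB hs'
        have : 0 ≤ 2 * ε ^ 2 * α * (s ^ 2 / lam - 1) := by
          have := sub_nonneg.mpr hs'
          positivity
        linarith [show s ^ 2 * (1 + B / lam) = s ^ 2 + B * (s ^ 2 / lam) by ring]
    _ = ε ^ 2 * (α ^ 2 * s ^ 2 - 2 * α) := by
        rw [← hroot]
        field_simp
        ring

theorem nonpos_of_lapR_pos_on_exterior {f : Pt → ℝ} {r : ℝ} (hf : Continuous f)
    (hdec : Tendsto f (cocompact Pt) (𝓝 0)) (hsphere : ∀ y : Pt, ‖y‖ = r → f y ≤ 0)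
    (hlap : ∀ y : Pt, r < ‖y‖ → 0 < f y → 0 < lapR f y) {x : Pt} (hx : r ≤ ‖x‖) :
    f x ≤ 0 := by
  by_contra! hfx
  obtain ⟨x₀, hx₀, hmax⟩ := hf.continuousOn.exists_isMaxOn'
    (isClosed_le continuous_const continuous_norm) (show x ∈ {y : Pt | r ≤ ‖y‖} from hx)
    (((hdec.eventually (gt_mem_nhds hfx)).filter_mono inf_le_left).mono fun _ => le_of_lt)
  have hpos : 0 < f x₀ := hfx.trans_le (hmax hx)
  have hx₀ : r < ‖x₀‖ := (show r ≤ ‖x₀‖ from hx₀).lt_of_ne fun h => (hsphere x₀ h.symm).not_gt hpos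
  have hloc : IsLocalMax f x₀ := hmax.isLocalMax <| Filter.mem_of_superset
    ((isOpen_lt continuous_const continuous_norm).mem_nhds hx₀)
    (Set.ofPred_subset_ofPred.mpr fun _ => le_of_lt)
  exact (hlap x₀ hx₀ hpos).not_ge (lapR_nonpos_of_isLocalMax hloc hf.continuousAt)

section Schrodinger

variable {u V : Pt → ℝ} {ε lam : ℝ}

theorem mul_sq_le_of_lapR_eq {a : ℝ} (hu : Continuous u) (hpos : ∀ x, 0 < u x)
    (hdec : Tendsto u (cocompact Pt) (𝓝 0)) (ha : 0 ≤ a) (hV : ∀ x, a * u x ^ 2 ≤ V x)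
    (heq : ∀ x, -ε ^ 2 * lapR u x + (‖x‖ ^ 2 + V x) * u x = lam * u x) (x : Pt) :
    a * u x ^ 2 ≤ lam := by
  obtain ⟨x₀, hmax⟩ := hu.exists_forall_ge' x
    ((hdec.eventually (gt_mem_nhds (hpos x))).mono fun _ => le_of_lt)
  have hlap : lapR u x₀ ≤ 0 :=
    lapR_nonpos_of_isLocalMax (Filter.Eventually.of_forall hmax) hu.continuousAt
  have hV₀ : V x₀ ≤ lam := by
    have h : (‖x₀‖ ^ 2 + V x₀ - lam) * u x₀ ≤ 0 := by
      nlinarith [heq x₀, mul_nonpos_of_nonneg_of_nonpos (sq_nonneg ε) hlap]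
    nlinarith [nonpos_of_mul_nonpos_left h (hpos x₀), sq_nonneg ‖x₀‖]
  calc a * u x ^ 2 ≤ a * u x₀ ^ 2 := by
        have := (hpos x).le
        gcongr
        exact hmax x
    _ ≤ V x₀ := hV x₀
    _ ≤ lam := hV₀

theorem sInf_sphere_mul_exp_le {B r : ℝ} (hu : ContDiff ℝ 2 u) (hpos : ∀ x, 0 < u x)
    (hdec : Tendsto u (cocompact Pt) (𝓝 0)) (hε : 0 < ε) (hlam : 0 < lam) (hB : 0 ≤ B)
    (hV_nonneg : ∀ x, 0 ≤ V x) (hVB : ∀ x, V x ≤ lam + B)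
    (heq : ∀ x, -ε ^ 2 * lapR u x + (‖x‖ ^ 2 + V x) * u x = lam * u x)
    (hr : Real.sqrt lam < r) {x : Pt} (hx : r ≤ ‖x‖) :
    sInf (u '' Metric.sphere 0 r) * Real.exp (-(decayRate ε lam B / 2) * (‖x‖ ^ 2 - r ^ 2))
      ≤ u x := by
  set α := decayRate ε lam B
  set m := sInf (u '' Metric.sphere 0 r)
  set w : Pt → ℝ := fun y => m * Real.exp (-(α / 2) * (‖y‖ ^ 2 - r ^ 2))
  have hcompact : IsCompact (u '' Metric.sphere 0 r) := (isCompact_sphere 0 r).image hu.continuous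
  have hm_le : ∀ y ∈ Metric.sphere (0 : Pt) r, m ≤ u y := fun y hy =>
    csInf_le hcompact.bddBelow (Set.mem_image_of_mem u hy)
  have hw_pos : ∀ y, 0 < w y := by
    obtain ⟨y₀, -, hy₀⟩ := hcompact.sInf_mem <|
      (NormedSpace.sphere_nonempty.mpr ((Real.sqrt_nonneg _).trans hr.le)).image u
    have hm : 0 < m := (hpos y₀).trans_eq hy₀
    exact fun y => by positivity
  have hw : ContDiff ℝ 2 w := contDiff_const.mul
    (Real.contDiff_exp.comp (contDiff_const.mul ((contDiff_norm_sq ℝ).sub contDiff_const)))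
  have hw_dec : Tendsto w (cocompact Pt) (𝓝 0) :=
    tendsto_gaussian_cocompact m α (r ^ 2) (decayRate_pos B hlam)
  suffices w x - u x ≤ 0 by linarith
  refine nonpos_of_lapR_pos_on_exterior (f := fun y => w y - u y) (hw.continuous.sub hu.continuous)
    (by simpa using hw_dec.sub hdec)
    (fun y hy => ?_) (fun y hy hwu => ?_) hx
  · simpa [w, hy] using hm_le y (by simpa using hy)
  · have hlam_lt : lam < ‖y‖ ^ 2 :=
      (Real.sqrt_lt' (by linarith [Real.sqrt_nonneg lam])).mp (hr.trans hy)
    set c := ‖y‖ ^ 2 + V y - lam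
    have hc : 0 < c := by linarith [hV_nonneg y]
    have hlapu : ε ^ 2 * lapR u y = c * u y := by linear_combination -heq y
    have hlapw : lapR w y = (α ^ 2 * ‖y‖ ^ 2 - 2 * α) * w y := lapR_gaussian m α r y
    have hrate := sq_add_le_decayRate hε hlam hB hlam_lt.le
    refine pos_of_mul_pos_right (a := ε ^ 2) ?_ (sq_nonneg ε)
    rw [lapR_sub hw hu, mul_sub, hlapu, hlapw]
    calc 0 < c * (w y - u y) := mul_pos hc hwu
      _ ≤ (‖y‖ ^ 2 + B) * w y - c * u y := by nlinarith [hw_pos y, hVB y]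
      _ ≤ ε ^ 2 * (α ^ 2 * ‖y‖ ^ 2 - 2 * α) * w y - c * u y :=
          sub_le_sub_right (mul_le_mul_of_nonneg_right hrate (hw_pos y).le) _
      _ = ε ^ 2 * ((α ^ 2 * ‖y‖ ^ 2 - 2 * α) * w y) - c * u y := by ring

end Schrodinger

/-- Gaussian lower barriers for positive solutions of the
coupled Gross–Pitaevskii system. -/
theorem bound_from_below
    (g₁ g₂ g ε lam₁ lam₂ : ℝ)
    (hg₁ : 0 < g₁) (hg₂ : 0 < g₂) (hg : 0 < g) (hε : 0 < ε)
    (hlam₁ : 0 < lam₁) (hlam₂ : 0 < lam₂)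
    (u₁ u₂ : Pt → ℝ) (hu : GPPositiveSolution g₁ g₂ g ε lam₁ lam₂ u₁ u₂) :
    (∀ r : ℝ, Real.sqrt lam₁ < r → ∀ x : Pt, r ≤ ‖x‖ →
        sInf (u₁ '' Metric.sphere (0 : Pt) r) *
          Real.exp (-((1 / lam₁ + Real.sqrt (1 / lam₁ ^ 2
              + 1 / ε ^ 2 * (1 + g * lam₂ / (g₂ * lam₁)))) / 2)
            * (‖x‖ ^ 2 - r ^ 2)) ≤ u₁ x) ∧
    (∀ r : ℝ, Real.sqrt lam₂ < r → ∀ x : Pt, r ≤ ‖x‖ →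
        sInf (u₂ '' Metric.sphere (0 : Pt) r) *
          Real.exp (-((1 / lam₂ + Real.sqrt (1 / lam₂ ^ 2
              + 1 / ε ^ 2 * (1 + g * lam₁ / (g₁ * lam₂)))) / 2)
            * (‖x‖ ^ 2 - r ^ 2)) ≤ u₂ x) := by
  obtain ⟨⟨hs₁, hs₂, heq₁, heq₂, hdec₁, hdec₂⟩, hpos₁, hpos₂⟩ := hu
  have heq₁' : ∀ x, -ε ^ 2 * lapR u₁ x + (‖x‖ ^ 2 + (g₁ * u₁ x ^ 2 + g * u₂ x ^ 2)) * u₁ x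
      = lam₁ * u₁ x := fun x => by linear_combination heq₁ x
  have heq₂' : ∀ x, -ε ^ 2 * lapR u₂ x + (‖x‖ ^ 2 + (g₂ * u₂ x ^ 2 + g * u₁ x ^ 2)) * u₂ x
      = lam₂ * u₂ x := fun x => by linear_combination heq₂ x
  have hb₁ : ∀ x, g₁ * u₁ x ^ 2 ≤ lam₁ := mul_sq_le_of_lapR_eq hs₁.continuous hpos₁ hdec₁ hg₁.le
    (fun x => le_add_of_nonneg_right (by positivity)) heq₁'
  have hb₂ : ∀ x, g₂ * u₂ x ^ 2 ≤ lam₂ := mul_sq_le_of_lapR_eq hs₂.continuous hpos₂ hdec₂ hg₂.le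
    (fun x => le_add_of_nonneg_right (by positivity)) heq₂'
  have hc₁ : ∀ x, g * u₁ x ^ 2 ≤ g * lam₁ / g₁ := fun x => by
    rw [le_div_iff₀ hg₁]; nlinarith [hb₁ x]
  have hc₂ : ∀ x, g * u₂ x ^ 2 ≤ g * lam₂ / g₂ := fun x => by
    rw [le_div_iff₀ hg₂]; nlinarith [hb₂ x]
  have hs₁' : ContDiff ℝ 2 u₁ := hs₁.of_le (by norm_cast)
  have hs₂' : ContDiff ℝ 2 u₂ := hs₂.of_le (by norm_cast)
  refine ⟨fun r hr x hx => ?_, fun r hr x hx => ?_⟩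
  · simpa only [decayRate, div_div] using
      sInf_sphere_mul_exp_le hs₁' hpos₁ hdec₁ hε hlam₁ (by positivity) (fun x => by positivity)
      (fun x => add_le_add (hb₁ x) (hc₂ x)) heq₁' hr hx
  · simpa only [decayRate, div_div] using
      sInf_sphere_mul_exp_le hs₂' hpos₂ hdec₂ hε hlam₂ (by positivity) (fun x => by positivity)
      (fun x => add_le_add (hb₂ x) (hc₁ x)) heq₂' hr hx
end
end

section
/- Let (u₁,u₂) be a positive radially symmetric solution of the coupled Gross–Pitaevskii system with coefficients λ₁,ε, λ₂,ε > 0. Then there exists a constant C_ε > 0, independent of r, such that |u_i'(r)| ≤ C_ε r u_i(r) for all r > 2√(λ_{i,ε}), i = 1,2. -/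
open MeasureTheory Filter
open scoped Real Topology

noncomputable section

/-! Along a ray the profile `F` of a radial component solves
`F'' + F'/r = V F` with `V = (r² - λ + c) / ε²`, where `c ≥ 0` is the bounded coupling term;
hence `0 ≤ V ≤ A r²` for `r ≥ √λ`. Since `(r F')' = r V F ≥ 0`, a positive value of `F'` past
`√λ` would make `F` increase from there on, against `F > 0`, `F → 0`: so `F' ≤ 0`. For the lower
bound pick `K` with `V + 2K ≤ K² r²`; then `r e^{-K r²/2} (F' + K r F)` is nonincreasing, and a
negative value of `F' + K r F` at some `r₀` would force `F' ≤ -δ < 0` on `[r₀, ∞)`, again against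
`F > 0`. Thus `-K r F ≤ F' ≤ 0`. -/

open Set

theorem not_forall_deriv_le_neg_of_pos {F : ℝ → ℝ} {r₀ δ : ℝ} (hF : Differentiable ℝ F) (hδ : 0 < δ)
    (hpos : ∀ r ≥ r₀, 0 < F r) : ¬ ∀ r ≥ r₀, deriv F r ≤ -δ := by
  intro hderiv
  have hr₀ : r₀ ≤ r₀ + F r₀ / δ := le_add_of_nonneg_right (div_pos (hpos r₀ le_rfl) hδ).le
  have hdrop := (convex_Ici r₀).image_sub_le_mul_sub_of_deriv_le hF.continuous.continuousOn
    hF.differentiableOn (fun r hr => hderiv r (interior_subset hr)) r₀ self_mem_Ici _ hr₀ hr₀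
  rw [add_sub_cancel_left, neg_mul, mul_div_cancel₀ _ hδ.ne'] at hdrop
  linarith [hpos _ hr₀]

theorem exists_mul_sq_add_le_sq_mul_sq (A : ℝ) {b : ℝ} (hb : 0 < b) :
    ∃ K > 0, ∀ r ≥ b, A * r ^ 2 + 2 * K ≤ K ^ 2 * r ^ 2 := by
  set c := 2 / b ^ 2
  have hc : c * b ^ 2 = 2 := div_mul_cancel₀ 2 (by positivity)
  refine ⟨1 + |A| + c, by positivity, fun r hr => ?_⟩
  have hr2 : b ^ 2 ≤ r ^ 2 := by gcongr
  have hcr : 2 ≤ c * r ^ 2 := hc ▸ mul_le_mul_of_nonneg_left hr2 (by positivity)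
  have h1 : 0 ≤ (|A| + c) * |A| * r ^ 2 := by positivity
  have h2 : A * r ^ 2 ≤ |A| * r ^ 2 := by gcongr; exact le_abs_self A
  nlinarith [mul_le_mul_of_nonneg_left hcr (by positivity : (0 : ℝ) ≤ 1 + |A| + c)]

section RadialODE

variable {F V : ℝ → ℝ} {b : ℝ}

theorem monotoneOn_mul_deriv_of_radial_ode (hb : 0 < b) (hF' : Differentiable ℝ (deriv F))
    (hode : ∀ r ≥ b, deriv (deriv F) r + deriv F r / r = V r * F r)
    (hVF : ∀ r ≥ b, 0 ≤ V r * F r) :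
    MonotoneOn (fun r => r * deriv F r) (Ici b) := by
  have hdiff : Differentiable ℝ (fun r => r * deriv F r) := differentiable_id.mul hF'
  refine monotoneOn_of_deriv_nonneg (convex_Ici b) hdiff.continuous.continuousOn
    hdiff.differentiableOn fun r hr => ?_
  rw [interior_Ici, mem_Ioi] at hr
  have hr₀ : 0 < r := hb.trans hr
  have hderiv : deriv (fun r => r * deriv F r) r = r * (V r * F r) := by
    rw [((hasDerivAt_id' r).fun_mul (hF' r).hasDerivAt).deriv, ← hode r hr.le]
    field_simp
    ring
  rw [hderiv]
  exact mul_nonneg hr₀.le (hVF r hr.le)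

theorem deriv_nonpos_of_radial_ode (hb : 0 < b) (hF : Differentiable ℝ F)
    (hF' : Differentiable ℝ (deriv F))
    (hode : ∀ r ≥ b, deriv (deriv F) r + deriv F r / r = V r * F r)
    (hV : ∀ r ≥ b, 0 ≤ V r) (hpos : ∀ r ≥ b, 0 < F r) (hlim : Tendsto F atTop (𝓝 0)) :
    ∀ r ≥ b, deriv F r ≤ 0 := by
  intro r₀ hr₀
  by_contra! hderiv₀
  have hmono := monotoneOn_mul_deriv_of_radial_ode hb hF' hode
    fun r hr => mul_nonneg (hV r hr) (hpos r hr).le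
  have hderiv : ∀ r ≥ r₀, 0 ≤ deriv F r := fun r hr => by
    have := hmono hr₀ (hr₀.trans hr : b ≤ r) hr
    nlinarith [hb.trans_le hr₀]
  have hFmono : MonotoneOn F (Ici r₀) :=
    monotoneOn_of_deriv_nonneg (convex_Ici r₀) hF.continuous.continuousOn
      hF.differentiableOn fun r hr => hderiv r (interior_subset hr)
  have hF₀ : F r₀ ≤ 0 := ge_of_tendsto hlim <| by
    filter_upwards [eventually_ge_atTop r₀] with r hr
    exact hFmono self_mem_Ici hr hr
  exact (hpos r₀ hr₀).not_ge hF₀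

theorem antitoneOn_weighted_of_radial_ode {K : ℝ} (hb : 0 < b) (hF : Differentiable ℝ F)
    (hF' : Differentiable ℝ (deriv F))
    (hode : ∀ r ≥ b, deriv (deriv F) r + deriv F r / r = V r * F r)
    (hVK : ∀ r ≥ b, V r + 2 * K ≤ K ^ 2 * r ^ 2) (hpos : ∀ r ≥ b, 0 < F r) :
    AntitoneOn (fun r => r * Real.exp (-(K * r ^ 2 / 2)) * (deriv F r + K * r * F r))
      (Ici b) := by
  set E : ℝ → ℝ := fun r => Real.exp (-(K * r ^ 2 / 2))
  have hE : ∀ r, HasDerivAt E (-(K * r) * E r) r := fun r => by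
    have := (((hasDerivAt_pow 2 r).const_mul K).div_const 2).fun_neg.exp
    convert this using 1
    push_cast
    ring
  have hW : ∀ r, HasDerivAt (fun r => r * E r * (deriv F r + K * r * F r))
      ((1 * E r + r * (-(K * r) * E r)) * (deriv F r + K * r * F r)
        + r * E r * (deriv (deriv F) r + (K * 1 * F r + K * r * deriv F r))) r := fun r =>
    ((hasDerivAt_id' r).mul (hE r)).mul
      ((hF' r).hasDerivAt.add (((hasDerivAt_id' r).const_mul K).mul (hF r).hasDerivAt))
  refine antitoneOn_of_deriv_nonpos (convex_Ici b) (HasDerivAt.continuousOn fun r _ => hW r)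
    (fun r _ => (hW r).differentiableAt.differentiableWithinAt) fun r hr => ?_
  rw [interior_Ici, mem_Ioi] at hr
  have hr₀ : 0 < r := hb.trans hr
  have hF'' : deriv (deriv F) r = V r * F r - deriv F r / r := by linarith [hode r hr.le]
  rw [(hW r).deriv, hF'']
  have hform : (1 * E r + r * (-(K * r) * E r)) * (deriv F r + K * r * F r)
      + r * E r * (V r * F r - deriv F r / r + (K * 1 * F r + K * r * deriv F r))
      = r * E r * F r * (V r + 2 * K - K ^ 2 * r ^ 2) := by
    field_simp
    ring
  rw [hform]
  exact mul_nonpos_of_nonneg_of_nonpos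
    (mul_nonneg (mul_nonneg hr₀.le (Real.exp_pos _).le) (hpos r hr.le).le)
    (by linarith [hVK r hr.le])

theorem deriv_add_mul_nonneg_of_radial_ode {K : ℝ} (hb : 0 < b) (hK : 0 < K)
    (hF : Differentiable ℝ F) (hF' : Differentiable ℝ (deriv F))
    (hode : ∀ r ≥ b, deriv (deriv F) r + deriv F r / r = V r * F r)
    (hVK : ∀ r ≥ b, V r + 2 * K ≤ K ^ 2 * r ^ 2) (hpos : ∀ r ≥ b, 0 < F r) :
    ∀ r ≥ b, 0 ≤ deriv F r + K * r * F r := by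
  set E : ℝ → ℝ := fun r => Real.exp (-(K * r ^ 2 / 2))
  set G : ℝ → ℝ := fun r => deriv F r + K * r * F r
  intro r₀ hbr₀
  by_contra! hG₀
  have hr₀ : 0 < r₀ := hb.trans_le hbr₀
  set W₀ := r₀ * E r₀ * G r₀
  have hW₀ : W₀ < 0 := mul_neg_of_pos_of_neg (mul_pos hr₀ (Real.exp_pos _)) hG₀
  have hanti := antitoneOn_weighted_of_radial_ode hb hF hF' hode hVK hpos
  refine not_forall_deriv_le_neg_of_pos hF (δ := -W₀ * (K * r₀ / 2))
    (mul_pos (neg_pos.mpr hW₀) (by positivity)) (fun r hr => hpos r (hbr₀.trans hr))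
    fun r hr₀r => ?_
  have hr : 0 < r := hr₀.trans_le hr₀r
  have hWr : r * E r * G r ≤ W₀ := hanti hbr₀ (hbr₀.trans hr₀r) hr₀r
  have hxe : K * r₀ / 2 * (r * E r) ≤ 1 := calc
    K * r₀ / 2 * (r * E r) ≤ K * r / 2 * (r * E r) :=
      mul_le_mul_of_nonneg_right (by gcongr) (mul_nonneg hr.le (Real.exp_pos _).le)
    _ = K * r ^ 2 / 2 * Real.exp (-(K * r ^ 2 / 2)) := by ring
    _ ≤ Real.exp (-1) := Real.mul_exp_neg_le_exp_neg_one _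
    _ ≤ 1 := Real.exp_le_one_iff.mpr (by norm_num)
  have hKrF : 0 ≤ K * r * F r := mul_nonneg (mul_nonneg hK.le hr.le) (hpos r (hbr₀.trans hr₀r)).le
  have hG : G r ≤ W₀ * (K * r₀ / 2) := by
    nlinarith [mul_pos hr (Real.exp_pos (-(K * r ^ 2 / 2)))]
  linarith

theorem abs_deriv_le_of_radial_ode {A : ℝ} (hb : 0 < b) (hF : Differentiable ℝ F)
    (hF' : Differentiable ℝ (deriv F))
    (hode : ∀ r ≥ b, deriv (deriv F) r + deriv F r / r = V r * F r)
    (hV : ∀ r ≥ b, 0 ≤ V r) (hVA : ∀ r ≥ b, V r ≤ A * r ^ 2) (hpos : ∀ r ≥ b, 0 < F r)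
    (hlim : Tendsto F atTop (𝓝 0)) :
    ∃ C > 0, ∀ r ≥ b, |deriv F r| ≤ C * r * F r := by
  obtain ⟨K, hK, hAK⟩ := exists_mul_sq_add_le_sq_mul_sq A hb
  have hlower := deriv_add_mul_nonneg_of_radial_ode hb hK hF hF' hode
    (fun r hr => (add_le_add_left (hVA r hr) _).trans (hAK r hr)) hpos
  have hupper := deriv_nonpos_of_radial_ode hb hF hF' hode hV hpos hlim
  refine ⟨K, hK, fun r hr => abs_le.mpr ⟨by linarith [hlower r hr], ?_⟩⟩
  linarith [hupper r hr, mul_nonneg (mul_nonneg hK.le (hb.trans_le hr).le) (hpos r hr).le]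

end RadialODE

/-- Unlike the given profile `f`, which is unconstrained on `(-∞, 0)`, this one is smooth on `ℝ`. -/
def radialProfile (u : Pt → ℝ) (t : ℝ) : ℝ := u (t • EuclideanSpace.single 0 1)

theorem norm_smul_single_zero (t : ℝ) : ‖t • EuclideanSpace.single (0 : Fin 2) (1 : ℝ)‖ = |t| := by
  simp [norm_smul]

theorem radialProfile_eq {u : Pt → ℝ} {f : ℝ → ℝ} (hrad : ∀ x, u x = f ‖x‖) {t : ℝ}
    (ht : 0 ≤ t) : radialProfile u t = f t := by
  rw [radialProfile, hrad, norm_smul_single_zero, abs_of_nonneg ht]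

theorem eq_radialProfile_norm {u : Pt → ℝ} {f : ℝ → ℝ} (hrad : ∀ x, u x = f ‖x‖) (x : Pt) :
    u x = radialProfile u ‖x‖ := by
  rw [radialProfile_eq hrad (norm_nonneg x), hrad]

theorem contDiff_radialProfile {n : WithTop ℕ∞} {u : Pt → ℝ} (hu : ContDiff ℝ n u) :
    ContDiff ℝ n (radialProfile u) :=
  hu.comp (contDiff_id.smul contDiff_const)

theorem tendsto_radialProfile_atTop {u : Pt → ℝ} (hlim : Tendsto u (cocompact Pt) (𝓝 0)) :
    Tendsto (radialProfile u) atTop (𝓝 0) := by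
  refine hlim.comp ?_
  rw [← Metric.cobounded_eq_cocompact, ← tendsto_norm_atTop_iff_cobounded]
  simpa only [norm_smul_single_zero] using tendsto_abs_atTop_atTop

theorem deriv_eq_deriv_radialProfile {u : Pt → ℝ} {f : ℝ → ℝ} (hrad : ∀ x, u x = f ‖x‖) {r : ℝ}
    (hr : 0 < r) : deriv f r = deriv (radialProfile u) r :=
  Filter.EventuallyEq.deriv_eq <| eventually_of_mem (Ioi_mem_nhds hr) fun _ ht =>
    (radialProfile_eq hrad (le_of_lt ht)).symm

theorem iteratedDeriv_two_comp_sqrt_sq_add_sq {F : ℝ → ℝ} {r : ℝ} (hr : 0 < r)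
    (hF : Differentiable ℝ F) (hF' : DifferentiableAt ℝ (deriv F) r) :
    iteratedDeriv 2 (fun t => F √(r ^ 2 + t ^ 2)) 0 = deriv F r / r := by
  have hρ : ∀ t, 0 < r ^ 2 + t ^ 2 := fun t => by positivity
  have hρ' : ∀ t, HasDerivAt (fun t => √(r ^ 2 + t ^ 2)) (t / √(r ^ 2 + t ^ 2)) t := fun t => by
    have := ((hasDerivAt_pow 2 t).const_add (r ^ 2)).sqrt (hρ t).ne'
    convert this using 1
    push_cast
    ring
  have hρ₀ : √(r ^ 2 + 0 ^ 2) = r := by simp [Real.sqrt_sq hr.le]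
  have hderiv : deriv (fun t => F √(r ^ 2 + t ^ 2))
      = fun t => deriv F √(r ^ 2 + t ^ 2) * (t / √(r ^ 2 + t ^ 2)) :=
    funext fun t => ((hF _).hasDerivAt.comp t (hρ' t)).deriv
  have hfirst : HasDerivAt (fun t => deriv F √(r ^ 2 + t ^ 2))
      (deriv (deriv F) r * (0 / √(r ^ 2 + 0 ^ 2))) 0 :=
    HasDerivAt.comp_of_eq 0 hF'.hasDerivAt (hρ' 0) hρ₀.symm
  have hquot := (hasDerivAt_id' (0 : ℝ)).fun_div (hρ' 0) (Real.sqrt_pos.mpr (hρ 0)).ne'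
  rw [iteratedDeriv_succ, iteratedDeriv_one, hderiv, (hfirst.fun_mul hquot).deriv, hρ₀]
  field_simp
  ring

theorem lapR_smul_single_of_radial {u : Pt → ℝ} {f : ℝ → ℝ} (hu : ContDiff ℝ 2 u)
    (hrad : ∀ x, u x = f ‖x‖) {r : ℝ} (hr : 0 < r) :
    lapR u (r • EuclideanSpace.single 0 1) =
      deriv (deriv (radialProfile u)) r + deriv (radialProfile u) r / r := by
  have hF : ContDiff ℝ 2 (radialProfile u) := contDiff_radialProfile hu
  have haxis : (fun t : ℝ => u (r • EuclideanSpace.single 0 1 + t • EuclideanSpace.single 0 1))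
      = fun t => radialProfile u (r + t) := funext fun t => by rw [← add_smul]; rfl
  have hnormal : (fun t : ℝ => u (r • EuclideanSpace.single 0 1 + t • EuclideanSpace.single 1 1))
      = fun t => radialProfile u √(r ^ 2 + t ^ 2) := funext fun t => by
    rw [eq_radialProfile_norm hrad, EuclideanSpace.norm_eq, Fin.sum_univ_two]
    simp
  rw [lapR, Fin.sum_univ_two, haxis, hnormal, iteratedDeriv_comp_const_add,
    iteratedDeriv_two_comp_sqrt_sq_add_sq hr (hF.differentiable two_ne_zero)
      ((hF.deriv' (n := 1)).differentiable one_ne_zero r)]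
  simp only [add_zero, iteratedDeriv_succ, iteratedDeriv_zero]

theorem exists_forall_sq_le_of_tendsto_cocompact {X : Type*} [TopologicalSpace X] {u : X → ℝ}
    (hu : Continuous u) (hlim : Tendsto u (cocompact X) (𝓝 0)) : ∃ M, ∀ x, u x ^ 2 ≤ M :=
  let u₀ : ZeroAtInftyContinuousMap X ℝ := ⟨⟨u, hu⟩, hlim⟩
  ⟨‖u₀.toBCF‖ ^ 2, fun x => sq_le_sq.mpr ((u₀.toBCF.norm_coe_le_norm x).trans (le_abs_self _))⟩

theorem abs_deriv_le_of_radial_schrodinger {u c : Pt → ℝ} {f : ℝ → ℝ} {ε lam B : ℝ}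
    (hε : ε ≠ 0) (hlam : 0 < lam) (hu : ContDiff ℝ 2 u) (hrad : ∀ x, u x = f ‖x‖)
    (hpos : ∀ x, 0 < u x) (hlim : Tendsto u (cocompact Pt) (𝓝 0))
    (hc : ∀ x, 0 ≤ c x) (hcB : ∀ x, c x ≤ B)
    (hpde : ∀ x, -ε ^ 2 * lapR u x + ‖x‖ ^ 2 * u x + c x * u x = lam * u x) :
    ∃ C > 0, ∀ r ≥ √lam, |deriv f r| ≤ C * r * f r := by
  set V : ℝ → ℝ := fun r => (r ^ 2 - lam + c (r • EuclideanSpace.single 0 1)) / ε ^ 2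
  have hb : 0 < √lam := Real.sqrt_pos.mpr hlam
  have hF := contDiff_radialProfile hu
  have hode : ∀ r ≥ √lam, deriv (deriv (radialProfile u)) r + deriv (radialProfile u) r / r
      = V r * radialProfile u r := fun r hr => by
    have hr : 0 < r := hb.trans_le hr
    have := hpde (r • EuclideanSpace.single 0 1)
    rw [lapR_smul_single_of_radial hu hrad hr, norm_smul_single_zero, abs_of_pos hr] at this
    have hFr : radialProfile u r = u (r • EuclideanSpace.single 0 1) := rfl
    rw [hFr, div_mul_eq_mul_div, eq_div_iff (pow_ne_zero 2 hε)]
    linear_combination -this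
  have hlam_le : ∀ r ≥ √lam, lam ≤ r ^ 2 := fun r hr =>
    Real.sq_sqrt hlam.le ▸ pow_le_pow_left₀ hb.le hr 2
  have hV : ∀ r ≥ √lam, 0 ≤ V r := fun r hr =>
    div_nonneg (by linarith [hlam_le r hr, hc (r • EuclideanSpace.single 0 1)]) (sq_nonneg ε)
  have hVA : ∀ r ≥ √lam, V r ≤ (1 + B / lam) / ε ^ 2 * r ^ 2 := fun r hr => by
    have hB : B ≤ B / lam * r ^ 2 := by
      rw [div_mul_eq_mul_div, le_div_iff₀ hlam]
      exact mul_le_mul_of_nonneg_left (hlam_le r hr) ((hc 0).trans (hcB 0))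
    rw [div_mul_eq_mul_div]
    unfold V
    gcongr
    linarith [hcB (r • EuclideanSpace.single 0 1)]
  obtain ⟨C, hC, hbound⟩ := abs_deriv_le_of_radial_ode hb (hF.differentiable two_ne_zero)
    ((hF.deriv' (n := 1)).differentiable one_ne_zero) hode hV hVA (fun r _ => hpos _)
    (tendsto_radialProfile_atTop hlim)
  refine ⟨C, hC, fun r hr => ?_⟩
  rw [deriv_eq_deriv_radialProfile hrad (hb.trans_le hr),
    ← radialProfile_eq hrad (hb.le.trans hr)]
  exact hbound r hr

/-- For a positive radial solution, the radial derivative is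
controlled by `C_ε r u_i(r)` for `r > 2√λ_i`. -/
theorem radial_derivative_bound
    (g₁ g₂ g ε lam₁ lam₂ : ℝ)
    (hg₁ : 0 < g₁) (hg₂ : 0 < g₂) (hg : 0 < g) (hε : 0 < ε)
    (hlam₁ : 0 < lam₁) (hlam₂ : 0 < lam₂)
    (u₁ u₂ : Pt → ℝ) (f₁ f₂ : ℝ → ℝ)
    (hu : GPPositiveSolution g₁ g₂ g ε lam₁ lam₂ u₁ u₂)
    (hrad₁ : ∀ x : Pt, u₁ x = f₁ ‖x‖) (hrad₂ : ∀ x : Pt, u₂ x = f₂ ‖x‖) :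
    ∃ C > 0, (∀ r : ℝ, 2 * Real.sqrt lam₁ < r → |deriv f₁ r| ≤ C * r * f₁ r) ∧
      (∀ r : ℝ, 2 * Real.sqrt lam₂ < r → |deriv f₂ r| ≤ C * r * f₂ r) := by
  obtain ⟨⟨hu₁, hu₂, hpde₁, hpde₂, hlim₁, hlim₂⟩, hpos₁, hpos₂⟩ := hu
  have hle : (2 : WithTop ℕ∞) ≤ (⊤ : ℕ∞) := WithTop.coe_le_coe.mpr le_top
  obtain ⟨M₁, hM₁⟩ := exists_forall_sq_le_of_tendsto_cocompact hu₁.continuous hlim₁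
  obtain ⟨M₂, hM₂⟩ := exists_forall_sq_le_of_tendsto_cocompact hu₂.continuous hlim₂
  obtain ⟨C₁, hC₁, hbound₁⟩ := abs_deriv_le_of_radial_schrodinger
    (c := fun x => g₁ * u₁ x ^ 2 + g * u₂ x ^ 2) (B := g₁ * M₁ + g * M₂)
    hε.ne' hlam₁ (hu₁.of_le hle) hrad₁ hpos₁ hlim₁ (fun x => by positivity)
    (fun x => by gcongr; exacts [hM₁ x, hM₂ x]) fun x => by linear_combination hpde₁ x
  obtain ⟨C₂, -, hbound₂⟩ := abs_deriv_le_of_radial_schrodinger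
    (c := fun x => g₂ * u₂ x ^ 2 + g * u₁ x ^ 2) (B := g₂ * M₂ + g * M₁)
    hε.ne' hlam₂ (hu₂.of_le hle) hrad₂ hpos₂ hlim₂ (fun x => by positivity)
    (fun x => by gcongr; exacts [hM₂ x, hM₁ x]) fun x => by linear_combination hpde₂ x
  refine ⟨max C₁ C₂, lt_max_of_lt_left hC₁, fun r hr => ?_, fun r hr => ?_⟩
  · have hr₀ : 0 ≤ r := by linarith [Real.sqrt_nonneg lam₁]
    have hf : 0 < f₁ r := radialProfile_eq hrad₁ hr₀ ▸ hpos₁ _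
    exact (hbound₁ r (by linarith)).trans <| by gcongr; exact le_max_left C₁ C₂
  · have hr₀ : 0 ≤ r := by linarith [Real.sqrt_nonneg lam₂]
    have hf : 0 < f₂ r := radialProfile_eq hrad₂ hr₀ ▸ hpos₂ _
    exact (hbound₂ r (by linarith)).trans <| by gcongr; exact le_max_right C₁ C₂
end
end
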